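/- arXiv:0810.3353 — 5 statements merged into one kernel-verified Lean document; each statement's English description precedes it below -/
import Mathlib

section
/- Let m and n be natural numbers with m ≥ 5, n ≥ 5, m ≢ 2 (mod 4) and n ≢ 2 (mod 4). If the subfields ℚ(ζ_m + ζ_m⁻¹) and ℚ(ζ_n + ζ_n⁻¹) of ℂ are equal, then m = n. (In other words, distinct cyclotomic fields, normalized so that their conductor is not congruent to 2 modulo 4, have distinct maximal totally real subfields.) -/
/-!
Let `ζ` be a primitive `mn`-th root of unity, so that `ζ^n` and `ζ^m` are primitive `m`-th and
`n`-th roots of unity. For `a` prime to `mn` with `a ≡ 1 (mod m)`, the embedding `ζ ↦ ζ^a` of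
`ℚ(ζ)` fixes `ζ^n`, hence fixes `ℚ(ζ^n + ζ^{-n}) ∋ ζ^m + ζ^{-m}`; so
`ζ^{ma} = ζ^{±m}`, i.e. `a ≡ ±1 (mod n)`.

If `n ∤ m`, pick a prime `p ∣ n / gcd(m, n)`. Since `n ≥ 5` and `n ≢ 2 (mod 4)`, there is a
unit `b ≢ ±1 (mod n)` with `b ≡ 1 (mod gcd(m, n))`: `b = 1 + n/p` if `p² ∣ n`, and
`b ≡ 2 (mod p)`, `b ≡ 1 (mod n/p)` otherwise. The Chinese remainder theorem lifts `b` to an `a`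
as above with `a ≡ b (mod n)`, a contradiction. Hence `n ∣ m`, and symmetrically `m ∣ n`.
-/

open IntermediateField Polynomial

theorem IsPrimitiveRoot.exists_algHom_adjoin_gen_eq_pow {L : Type*} [Field L] [CharZero L]
    {ζ : L} {N a : ℕ} (hζ : IsPrimitiveRoot ζ N) (hN : 0 < N) (ha : a.Coprime N) :
    ∃ φ : ℚ⟮ζ⟯ →ₐ[ℚ] L, φ (AdjoinSimple.gen ℚ ζ) = ζ ^ a := by
  have hroot : ζ ^ a ∈ (minpoly ℚ ζ).aroots L := by
    rw [← cyclotomic_eq_minpoly_rat hζ hN, mem_aroots, aeval_def, eval₂_eq_eval_map,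
      map_cyclotomic]
    exact ⟨cyclotomic_ne_zero N ℚ, (hζ.pow_of_coprime a ha).isRoot_cyclotomic hN⟩
  exact ⟨_, algHomAdjoinIntegralEquiv_symm_apply_gen ℚ (hζ.isIntegral hN).tower_top
    ⟨_, hroot⟩⟩

theorem IntermediateField.algHom_apply_eq_self_of_mem_adjoin_simple {F L : Type*} [Field F]
    [Field L] [Algebra F L] {K : IntermediateField F L} (φ : K →ₐ[F] L) {x y : K}
    (hx : φ x = x) (hy : (y : L) ∈ F⟮(x : L)⟯) : φ y = y := by
  have hle : F⟮(x : L)⟯ ≤ K := adjoin_simple_le_iff.mpr x.2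
  have heq : φ.comp (inclusion hle) = F⟮(x : L)⟯.val :=
    adjoin_algHom_ext F fun z hz => by
      rw [Set.mem_singleton_iff] at hz
      subst hz
      exact hx
  exact congr($heq ⟨y, hy⟩)

theorem eq_or_eq_inv_of_add_inv_eq_add_inv {K : Type*} [Field K] {u v : K} (hu : u ≠ 0)
    (hv : v ≠ 0) (h : u + u⁻¹ = v + v⁻¹) : u = v ∨ u = v⁻¹ := by
  have : (u - v) * (u * v - 1) = 0 := by
    field_simp at h
    linear_combination h
  rcases mul_eq_zero.mp this with h | h
  · exact .inl (sub_eq_zero.mp h)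
  · exact .inr (eq_inv_of_mul_eq_one_left (sub_eq_zero.mp h))

theorem IsPrimitiveRoot.modEq_one_or_dvd_add_one_of_mem_adjoin {L : Type*} [Field L]
    [CharZero L] {ζ : L} {m n a : ℕ} (hζ : IsPrimitiveRoot ζ (m * n))
    (hmem : ζ ^ m + (ζ ^ m)⁻¹ ∈ ℚ⟮ζ ^ n + (ζ ^ n)⁻¹⟯) (ha : a.Coprime (m * n))
    (ham : a ≡ 1 [MOD m]) : a ≡ 1 [MOD n] ∨ n ∣ a + 1 := by
  rcases Nat.eq_zero_or_pos (m * n) with hmn | hmn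
  · rw [hmn, Nat.coprime_zero_right] at ha
    exact .inl (ha ▸ rfl)
  have hζm : IsPrimitiveRoot (ζ ^ m) n := hζ.pow hmn rfl
  obtain ⟨φ, hφ⟩ := hζ.exists_algHom_adjoin_gen_eq_pow hmn ha
  set g := AdjoinSimple.gen ℚ ζ
  have hg : (g : L) = ζ := AdjoinSimple.coe_gen ℚ ζ
  have hfix_n : φ (g ^ n + (g ^ n)⁻¹) = ↑(g ^ n + (g ^ n)⁻¹) := by
    have : (ζ ^ n) ^ a = (ζ ^ n) ^ 1 :=
      pow_eq_pow_of_modEq ham (by rw [← pow_mul, mul_comm, hζ.pow_eq_one])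
    simp only [map_add, map_inv₀, map_pow, hφ, IntermediateField.coe_add,
      IntermediateField.coe_inv, IntermediateField.coe_pow, hg, pow_right_comm ζ a n, this,
      pow_one]
  have hfix_m : φ (g ^ m + (g ^ m)⁻¹) = ↑(g ^ m + (g ^ m)⁻¹) :=
    algHom_apply_eq_self_of_mem_adjoin_simple φ hfix_n (by simpa [hg] using hmem)
  simp only [map_add, map_inv₀, map_pow, hφ, IntermediateField.coe_add,
    IntermediateField.coe_inv, IntermediateField.coe_pow, hg, pow_right_comm ζ a m] at hfix_m
  have hn : n ≠ 0 := (Nat.pos_of_mul_pos_left hmn).ne'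
  rcases eq_or_eq_inv_of_add_inv_eq_add_inv (by simp [hζ.ne_zero hmn.ne']) (hζm.ne_zero hn)
    hfix_m with h | h
  · have h' : (ζ ^ m) ^ a = (ζ ^ m) ^ 1 := h.trans (pow_one _).symm
    rw [(hζm.isOfFinOrder hn).pow_eq_pow_iff_modEq, ← hζm.eq_orderOf] at h'
    exact .inl h'
  · refine .inr ((hζm.pow_eq_one_iff_dvd _).mp ?_)
    rw [pow_succ, h, inv_mul_cancel₀ (hζm.ne_zero hn)]

theorem Nat.exists_coprime_modEq_one_ne_pm_one_of_sq_dvd {n d p : ℕ} (hp : 2 ≤ p)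
    (hpn : p ^ 2 ∣ n) (hdp : d * p ∣ n) (hn : 5 ≤ n) :
    ∃ b, b.Coprime n ∧ b ≡ 1 [MOD d] ∧ ¬ b ≡ 1 [MOD n] ∧ ¬ n ∣ b + 1 := by
  obtain ⟨c, rfl⟩ := hpn
  have hc : 0 < c := Nat.pos_of_ne_zero (by rintro rfl; omega)
  have hd : d ∣ p * c :=
    Nat.dvd_of_mul_dvd_mul_right (k := p) (by omega)
      (by rwa [show p ^ 2 * c = p * c * p by ring] at hdp)
  refine ⟨1 + p * c, ?_, ?_, fun h => ?_, fun h => ?_⟩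
  · -- `n = p ^ 2 * c` divides `(p * c) ^ 2`, which is coprime to `1 + p * c`
    exact ((Nat.coprime_add_self_left.mpr (Nat.coprime_one_left _)).pow_right 2).coprime_dvd_right
      ⟨c, by ring⟩
  · simpa using (Nat.modEq_zero_iff_dvd.mpr hd).add_left 1
  · have h' := (Nat.modEq_iff_dvd' (by omega)).mp h.symm
    rw [add_tsub_cancel_left] at h'
    nlinarith [Nat.le_of_dvd (by positivity) h']
  · have := Nat.le_of_dvd (by positivity) h
    nlinarith

theorem Nat.exists_coprime_modEq_one_ne_pm_one_of_not_sq_dvd {n d p : ℕ} (hp : p.Prime)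
    (hpn : p ∣ n) (hsq : ¬ p ^ 2 ∣ n) (hdp : d * p ∣ n) (hn : 5 ≤ n) (hn4 : n % 4 ≠ 2) :
    ∃ b, b.Coprime n ∧ b ≡ 1 [MOD d] ∧ ¬ b ≡ 1 [MOD n] ∧ ¬ n ∣ b + 1 := by
  obtain ⟨c, rfl⟩ := hpn
  have hpc : ¬ p ∣ c := fun h => hsq (by rw [pow_two]; exact mul_dvd_mul_left p h)
  have hp2 : p ≠ 2 := by rintro rfl; omega
  have hd : d ∣ c := Nat.dvd_of_mul_dvd_mul_right (k := p) hp.pos (by rwa [mul_comm p c] at hdp)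
  obtain ⟨b, hb2, hb1⟩ := Nat.chineseRemainder (hp.coprime_iff_not_dvd.mpr hpc) 2 1
  refine ⟨b, Nat.Coprime.mul_right ?_ ?_, hb1.of_dvd hd, fun h => ?_, fun h => ?_⟩
  · rw [Nat.Coprime, hb2.gcd_eq]
    exact (Nat.coprime_primes Nat.prime_two hp).mpr hp2.symm
  · rw [Nat.Coprime, hb1.gcd_eq, Nat.gcd_one_left]
  · have := (Nat.modEq_iff_dvd' (by omega)).mp ((hb2.symm.trans (h.of_mul_right c)).symm)
    exact hp.one_lt.ne' (Nat.dvd_one.mp this)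
  · -- `b + 1 ≡ 3 (mod p)` and `b + 1 ≡ 2 (mod c)` force `p = 3`, `c ∣ 2`, so `n ∈ {3, 6}`
    have h3 : p ∣ 3 := ((hb2.add_right 1).dvd_iff dvd_rfl).mp (dvd_of_mul_right_dvd h)
    have h2 : c ∣ 2 := ((hb1.add_right 1).dvd_iff dvd_rfl).mp (dvd_of_mul_left_dvd h)
    have := (Nat.prime_dvd_prime_iff_eq hp Nat.prime_three).mp h3
    have := Nat.le_of_dvd two_pos h2
    interval_cases c <;> omega

theorem Nat.exists_coprime_modEq_one_ne_pm_one {n d : ℕ} (hn : 5 ≤ n) (hn4 : n % 4 ≠ 2)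
    (hd : d ∣ n) (hdn : d ≠ n) :
    ∃ b, b.Coprime n ∧ b ≡ 1 [MOD d] ∧ ¬ b ≡ 1 [MOD n] ∧ ¬ n ∣ b + 1 := by
  have hnd : n / d ≠ 1 := fun h => hdn (by rw [← Nat.div_mul_cancel hd, h, one_mul])
  obtain ⟨p, hp, hpd⟩ := Nat.exists_prime_and_dvd hnd
  have hdp : d * p ∣ n := Nat.mul_dvd_of_dvd_div hd hpd
  by_cases hsq : p ^ 2 ∣ n
  · exact exists_coprime_modEq_one_ne_pm_one_of_sq_dvd hp.two_le hsq hdp hn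
  · exact exists_coprime_modEq_one_ne_pm_one_of_not_sq_dvd hp (dvd_of_mul_left_dvd hdp) hsq hdp
      hn hn4

theorem Nat.exists_coprime_mul_modEq_one_modEq {m n b : ℕ} (hb : b.Coprime n)
    (hb1 : b ≡ 1 [MOD m.gcd n]) :
    ∃ a, a.Coprime (m * n) ∧ a ≡ 1 [MOD m] ∧ a ≡ b [MOD n] := by
  obtain ⟨a, ha1, hab⟩ := Nat.chineseRemainder' hb1.symm
  refine ⟨a, Nat.Coprime.mul_right ?_ ?_, ha1, hab⟩
  · rw [Nat.Coprime, ha1.gcd_eq, Nat.gcd_one_left]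
  · rwa [Nat.Coprime, hab.gcd_eq]

theorem Nat.dvd_of_forall_modEq_one_imp_modEq_pm_one {m n : ℕ} (hn : 5 ≤ n) (hn4 : n % 4 ≠ 2)
    (H : ∀ a, a.Coprime (m * n) → a ≡ 1 [MOD m] → a ≡ 1 [MOD n] ∨ n ∣ a + 1) :
    n ∣ m := by
  by_contra hnm
  obtain ⟨b, hb, hb1, hbn, hbn'⟩ := exists_coprime_modEq_one_ne_pm_one hn hn4
    (Nat.gcd_dvd_right m n) (mt Nat.gcd_eq_right_iff_dvd.mp hnm)
  obtain ⟨a, ha, ham, hab⟩ := exists_coprime_mul_modEq_one_modEq hb hb1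
  rcases H a ha ham with h | h
  · exact hbn (hab.symm.trans h)
  · exact hbn' (((hab.add_right 1).dvd_iff dvd_rfl).mp h)

theorem IsPrimitiveRoot.dvd_of_mem_adjoin {L : Type*} [Field L] [CharZero L] {ζ : L} {m n : ℕ}
    (hζ : IsPrimitiveRoot ζ (m * n)) (hn : 5 ≤ n) (hn4 : n % 4 ≠ 2)
    (hmem : ζ ^ m + (ζ ^ m)⁻¹ ∈ ℚ⟮ζ ^ n + (ζ ^ n)⁻¹⟯) : n ∣ m :=
  Nat.dvd_of_forall_modEq_one_imp_modEq_pm_one hn hn4 fun _ ha ham =>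
    hζ.modEq_one_or_dvd_add_one_of_mem_adjoin hmem ha ham

open Real Complex in
theorem Complex.exp_two_pi_I_div_mul_pow {k l : ℕ} (hl : l ≠ 0) :
    exp (2 * π * I / ↑(k * l)) ^ l = exp (2 * π * I / k) := by
  rw [← exp_nat_mul, Nat.cast_mul]
  rcases eq_or_ne k 0 with rfl | hk
  · simp
  · congr 1
    field_simp

/-- Distinct cyclotomic fields (normalized so that the conductor is not `2 mod 4`)
have distinct maximal totally real subfields: if `m, n ≥ 5`, `m, n ≢ 2 (mod 4)`, and
`ℚ(ζ_m + ζ_m⁻¹) = ℚ(ζ_n + ζ_n⁻¹)` as subfields of `ℂ`, then `m = n`. -/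
theorem maximal_real_subfield_determines_conductor
    (m n : ℕ) (hm : 5 ≤ m) (hn : 5 ≤ n)
    (hm4 : m % 4 ≠ 2) (hn4 : n % 4 ≠ 2)
    (ζm : ℂ) (hζm : ζm = Complex.exp (2 * Real.pi * Complex.I / m))
    (ζn : ℂ) (hζn : ζn = Complex.exp (2 * Real.pi * Complex.I / n))
    (h : ℚ⟮ζm + ζm⁻¹⟯ = ℚ⟮ζn + ζn⁻¹⟯) :
    m = n := by
  set ζ := Complex.exp (2 * Real.pi * Complex.I / ↑(m * n))
  have hζ : IsPrimitiveRoot ζ (m * n) := Complex.isPrimitiveRoot_exp _ (by positivity)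
  have hζ_pow_n : ζ ^ n = ζm := hζm ▸ Complex.exp_two_pi_I_div_mul_pow (by omega)
  have hζ_pow_m : ζ ^ m = ζn := by
    rw [hζn, ← Complex.exp_two_pi_I_div_mul_pow (k := n) (l := m) (by omega), mul_comm n m]
  apply Nat.dvd_antisymm
  · refine (mul_comm m n ▸ hζ).dvd_of_mem_adjoin hm hm4 ?_
    rw [hζ_pow_n, hζ_pow_m, ← h]
    exact mem_adjoin_simple_self ℚ _
  · refine hζ.dvd_of_mem_adjoin hn hn4 ?_
    rw [hζ_pow_n, hζ_pow_m, h]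
    exact mem_adjoin_simple_self ℚ _
end

section
/- Let m and n be positive integers with n < m, and suppose m, n ∉ {1, 2, 3, 4, 6}. If the subfields ℚ(ζ_m + ζ_m⁻¹) and ℚ(ζ_n + ζ_n⁻¹) of ℂ are equal, then n is odd and m = 2n. -/
/-!
For a primitive `k`-th root of unity `ξ` inside `ℚ(ζ_l)`, the automorphism `ζ_l ↦ ζ_l ^ a`
(`a` prime to `l`; it exists because cyclotomic polynomials are irreducible) fixes `ξ + ξ⁻¹`
exactly when `a ≡ ±1 (mod k)`. Taking `l = lcm(m, n)`, equality of the two real subfields gives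
`a ≡ ±1 (mod m) ↔ a ≡ ±1 (mod n)` for all `a` prime to `l`.

Since `-ζ_k` is a primitive `k/2`-th root of unity when `k ≡ 2 (mod 4)`, and
`(-ζ) + (-ζ)⁻¹ = -(ζ + ζ⁻¹)`, we may replace `m` and `n` by `p, q ≢ 2 (mod 4)`; it remains
to show `p = q`, and by symmetry `p ∣ q`. If `p` and `q` were coprime, the Chinese remainder
theorem would give `a ≡ 1 (mod q)` with `a ≢ ±1 (mod p)`. Otherwise `gcd(p, q) ∤ 2`, so
`a ≡ 1 (mod q)` forces `a ≡ 1 (mod p)`; then `(ℤ/l)ˣ → (ℤ/q)ˣ` is injective, `φ(l) = φ(q)`,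
hence `l = q` or `l = 2q` with `q` odd, and either way `p ∣ q`.
-/

open Polynomial IntermediateField

theorem add_inv_eq_add_inv_iff {K : Type*} [Field K] {x y : K} (hx : x ≠ 0) (hy : y ≠ 0) :
    x + x⁻¹ = y + y⁻¹ ↔ x = y ∨ x = y⁻¹ := by
  constructor
  · intro h
    have : (x - y) * (x - y⁻¹) = 0 := by
      linear_combination x * h + mul_inv_cancel₀ hy - mul_inv_cancel₀ hx
    rcases mul_eq_zero.1 this with h | h
    · exact Or.inl (sub_eq_zero.1 h)
    · exact Or.inr (sub_eq_zero.1 h)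
  · rintro (rfl | rfl)
    · rfl
    · rw [inv_inv, add_comm]

theorem IntermediateField.adjoin_simple_neg (F : Type*) {E : Type*} [Field F] [Field E]
    [Algebra F E] (x : E) : F⟮-x⟯ = F⟮x⟯ := by
  refine le_antisymm ?_ ?_ <;> rw [adjoin_simple_le_iff]
  · exact neg_mem (mem_adjoin_simple_self F x)
  · simpa using neg_mem (mem_adjoin_simple_self F (-x))

theorem pow_add_inv_pow_eq_aeval {K : Type*} [Field K] [CharZero K] {η : K} {l : ℕ}
    (hη : η ^ l = 1) (hl : l ≠ 0) (i : ℕ) :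
    η ^ i + (η ^ i)⁻¹ = aeval η (X ^ i + (X ^ (l - 1)) ^ i : ℚ[X]) := by
  rw [← inv_pow, inv_eq_of_mul_eq_one_right (by rw [mul_pow_sub_one hl, hη])]
  simp

namespace IsPrimitiveRoot

variable {K : Type*} [Field K]

theorem pow_add_inv_pow_eq_iff {ξ : K} {k : ℕ} (hξ : IsPrimitiveRoot ξ k) (hk : k ≠ 0)
    (a : ℕ) : ξ ^ a + (ξ ^ a)⁻¹ = ξ + ξ⁻¹ ↔ a ≡ 1 [MOD k] ∨ k ∣ a + 1 := by
  have hξ0 : ξ ≠ 0 := hξ.ne_zero hk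
  have hfix : ξ ^ a = ξ ↔ a ≡ 1 [MOD k] := by
    rw [hξ.eq_orderOf, ← (hξ.isOfFinOrder hk).pow_eq_pow_iff_modEq, pow_one]
  rw [add_inv_eq_add_inv_iff (pow_ne_zero a hξ0) hξ0, hfix, ← mul_eq_one_iff_eq_inv₀ hξ0,
    ← pow_succ, hξ.pow_eq_one_iff_dvd]

theorem neg_of_odd {R : Type*} [CommRing R] [NoZeroDivisors R] {ξ : R} {j : ℕ}
    (hξ : IsPrimitiveRoot ξ (2 * j)) (hj : Odd j) : IsPrimitiveRoot (-ξ) j := by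
  have hξj : ξ ^ j = -1 :=
    (hξ.pow (by positivity [hj.pos]) (mul_comm 2 j)).eq_neg_one_of_two_right
  refine ⟨by rw [neg_pow, hξj, hj.neg_one_pow, neg_one_mul, neg_neg], fun t ht => ?_⟩
  have : ξ ^ (2 * t) = 1 := by rw [pow_mul, ← neg_sq, ← pow_mul, mul_comm, pow_mul, ht, one_pow]
  exact Nat.dvd_of_mul_dvd_mul_left two_pos ((hξ.pow_eq_one_iff_dvd _).1 this)

theorem exists_adjoin_add_inv_eq_mod_four_ne_two (F : Type*) [Field F] [Algebra F K] {ξ : K}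
    {k : ℕ} (hξ : IsPrimitiveRoot ξ k) :
    ∃ (k' : ℕ) (ξ' : K), IsPrimitiveRoot ξ' k' ∧ F⟮ξ' + ξ'⁻¹⟯ = F⟮ξ + ξ⁻¹⟯ ∧ k' % 4 ≠ 2 ∧
      (k' = k ∨ k = 2 * k' ∧ Odd k') := by
  by_cases hk : k % 4 = 2
  · have hk' : k = 2 * (k / 2) := by omega
    have hodd : Odd (k / 2) := Nat.odd_iff.2 (by omega)
    have hξ' : IsPrimitiveRoot ξ (2 * (k / 2)) := by rwa [← hk']
    refine ⟨k / 2, -ξ, hξ'.neg_of_odd hodd, ?_, by omega, Or.inr ⟨hk', hodd⟩⟩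
    rw [inv_neg, ← neg_add, adjoin_simple_neg]
  · exact ⟨k, ξ, hξ, rfl, hk, Or.inl rfl⟩

variable [CharZero K] {ζ : K} {l a : ℕ}

theorem aeval_pow_eq_zero_of_coprime (hζ : IsPrimitiveRoot ζ l) (hl : 0 < l)
    (ha : a.Coprime l) {P : ℚ[X]} (hP : aeval ζ P = 0) : aeval (ζ ^ a) P = 0 := by
  obtain ⟨Q, rfl⟩ := minpoly.dvd ℚ ζ hP
  rw [map_mul, ← cyclotomic_eq_minpoly_rat hζ hl,
    cyclotomic_eq_minpoly_rat (hζ.pow_of_coprime a ha) hl, minpoly.aeval, zero_mul]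

theorem aeval_pow_eq_of_mem_adjoin (hζ : IsPrimitiveRoot ζ l) (hl : 0 < l) (ha : a.Coprime l)
    {f g : ℚ[X]} (hg : aeval (ζ ^ a) g = aeval ζ g) (hf : aeval ζ f ∈ ℚ⟮aeval ζ g⟯) :
    aeval (ζ ^ a) f = aeval ζ f := by
  have hg_int : IsIntegral ℚ (aeval ζ g) :=
    adjoin_le_integralClosure (hζ.isIntegral hl).tower_top (aeval_mem_adjoin_singleton ℚ ζ)
  rw [← mem_toSubalgebra, adjoin_simple_toSubalgebra_of_isAlgebraic hg_int.isAlgebraic,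
    Algebra.adjoin_singleton_eq_range_aeval] at hf
  obtain ⟨P, hP⟩ := hf
  have hR : aeval ζ (f - P.comp g) = 0 := by
    rw [map_sub, aeval_comp, sub_eq_zero]
    exact hP.symm
  have := hζ.aeval_pow_eq_zero_of_coprime hl ha hR
  rw [map_sub, aeval_comp, hg, sub_eq_zero] at this
  exact this.trans hP

theorem pow_add_inv_pow_eq_of_mem_adjoin (hζ : IsPrimitiveRoot ζ l) (hl : 0 < l)
    (ha : a.Coprime l) {i j : ℕ} (hmem : ζ ^ i + (ζ ^ i)⁻¹ ∈ ℚ⟮ζ ^ j + (ζ ^ j)⁻¹⟯)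
    (hfix : (ζ ^ j) ^ a + ((ζ ^ j) ^ a)⁻¹ = ζ ^ j + (ζ ^ j)⁻¹) :
    (ζ ^ i) ^ a + ((ζ ^ i) ^ a)⁻¹ = ζ ^ i + (ζ ^ i)⁻¹ := by
  have hζa : (ζ ^ a) ^ l = 1 := (hζ.pow_of_coprime a ha).pow_eq_one
  rw [pow_right_comm ζ j a] at hfix
  rw [pow_right_comm ζ i a]
  simp only [pow_add_inv_pow_eq_aeval hζ.pow_eq_one hl.ne',
    pow_add_inv_pow_eq_aeval hζa hl.ne'] at hmem hfix ⊢
  exact hζ.aeval_pow_eq_of_mem_adjoin hl ha hfix hmem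

theorem modEq_one_or_dvd_add_one_iff_of_adjoin_eq {ξ η : K} {p q : ℕ}
    (hξ : IsPrimitiveRoot ξ p) (hη : IsPrimitiveRoot η q) (hζ : IsPrimitiveRoot ζ (p.lcm q))
    (hp : 0 < p) (hq : 0 < q) (h : ℚ⟮ξ + ξ⁻¹⟯ = ℚ⟮η + η⁻¹⟯) (ha : a.Coprime (p.lcm q)) :
    (a ≡ 1 [MOD p] ∨ p ∣ a + 1) ↔ (a ≡ 1 [MOD q] ∨ q ∣ a + 1) := by
  have hl : 0 < p.lcm q := Nat.lcm_pos hp hq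
  have : NeZero (p.lcm q) := ⟨hl.ne'⟩
  obtain ⟨i, -, rfl⟩ :=
    hζ.eq_pow_of_pow_eq_one ((hξ.pow_eq_one_iff_dvd _).2 (Nat.dvd_lcm_left p q))
  obtain ⟨j, -, rfl⟩ :=
    hζ.eq_pow_of_pow_eq_one ((hη.pow_eq_one_iff_dvd _).2 (Nat.dvd_lcm_right p q))
  rw [← hξ.pow_add_inv_pow_eq_iff hp.ne', ← hη.pow_add_inv_pow_eq_iff hq.ne']
  exact ⟨hζ.pow_add_inv_pow_eq_of_mem_adjoin hl ha (h.ge (mem_adjoin_simple_self ℚ _)),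
    hζ.pow_add_inv_pow_eq_of_mem_adjoin hl ha (h.le (mem_adjoin_simple_self ℚ _))⟩

end IsPrimitiveRoot

theorem exists_coprime_not_modEq_one_not_dvd_add_one {p : ℕ} (hp : p % 4 ≠ 2) (hp5 : 5 ≤ p) :
    ∃ u, u.Coprime p ∧ ¬ (u ≡ 1 [MOD p] ∨ p ∣ u + 1) := by
  have hmid : ∀ u, 1 < u → u + 1 < p → ¬ (u ≡ 1 [MOD p] ∨ p ∣ u + 1) := by
    rintro u hu hup (h | h)
    · rw [Nat.ModEq, Nat.mod_eq_of_lt (by omega), Nat.mod_eq_of_lt (by omega)] at h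
      omega
    · exact absurd (Nat.le_of_dvd (by omega) h) (by omega)
  rcases Nat.even_or_odd p with hev | hodd
  · obtain ⟨j, rfl⟩ : 4 ∣ p := by rcases hev with ⟨r, hr⟩; omega
    refine ⟨2 * j + 1, Nat.coprime_of_mul_modEq_one (2 * j + 1) ?_, hmid _ (by omega) (by omega)⟩
    have : (2 * j + 1) * (2 * j + 1) = 1 + 4 * j * (j + 1) := by ring
    rw [this, Nat.ModEq, Nat.add_mul_mod_self_left]
  · exact ⟨2, Nat.coprime_two_left.2 hodd, hmid 2 (by omega) (by omega)⟩

theorem not_coprime_of_forall_modEq_one {p q : ℕ} (hp : p % 4 ≠ 2) (hp5 : 5 ≤ p)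
    (h : ∀ a, a.Coprime (p.lcm q) → a ≡ 1 [MOD q] → a ≡ 1 [MOD p] ∨ p ∣ a + 1) :
    ¬ p.Coprime q := by
  intro hpq
  obtain ⟨u, hu, hu_ne⟩ := exists_coprime_not_modEq_one_not_dvd_add_one hp hp5
  obtain ⟨a, hau, ha1⟩ := Nat.chineseRemainder hpq u 1
  have ha : a.Coprime (p.lcm q) := by
    rw [hpq.lcm_eq_mul]
    exact Nat.Coprime.mul_right (hau.gcd_eq.trans hu) (ha1.gcd_eq.trans (Nat.coprime_one_left q))
  refine hu_ne ?_
  rcases h a ha ha1 with h1 | h1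
  · exact Or.inl (hau.symm.trans h1)
  · exact Or.inr (((hau.add_right 1).dvd_iff dvd_rfl).1 h1)

theorem totient_lcm_eq_of_forall_modEq_one {p q : ℕ} (hp : 0 < p) (hq : 0 < q)
    (h : ∀ a, a.Coprime (p.lcm q) → a ≡ 1 [MOD q] → a ≡ 1 [MOD p]) :
    (p.lcm q).totient = q.totient := by
  have : NeZero (p.lcm q) := ⟨(Nat.lcm_pos hp hq).ne'⟩
  have : NeZero q := ⟨hq.ne'⟩
  have hql := Nat.dvd_lcm_right p q
  have hinj : Function.Injective (ZMod.unitsMap hql) := by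
    refine (injective_iff_map_eq_one _).2 fun u hu => ?_
    have hq1 : (u : ZMod (p.lcm q)).val ≡ 1 [MOD q] := by
      rw [← ZMod.natCast_eq_natCast_iff, Nat.cast_one, ZMod.natCast_val,
        ← ZMod.unitsMap_val hql, hu, Units.val_one]
    have hp1 := h _ (ZMod.val_coe_unit_coprime u) hq1
    have hl1 : (u : ZMod (p.lcm q)).val ≡ 1 [MOD p.lcm q] :=
      Int.natCast_modEq_iff.1 (Int.modEq_and_modEq_iff_modEq_lcm.1
        ⟨Int.natCast_modEq_iff.2 hp1, Int.natCast_modEq_iff.2 hq1⟩)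
    rw [← ZMod.natCast_eq_natCast_iff, ZMod.natCast_zmod_val, Nat.cast_one] at hl1
    exact Units.ext hl1
  have hbij := Fintype.card_of_bijective ⟨hinj, ZMod.unitsMap_surjective hql⟩
  rwa [ZMod.card_units_eq_totient, ZMod.card_units_eq_totient] at hbij

theorem dvd_of_forall_modEq_one_or_dvd_add_one {p q : ℕ} (hp : p % 4 ≠ 2) (hp5 : 5 ≤ p)
    (hq : q % 4 ≠ 2) (hq0 : 0 < q)
    (h : ∀ a, a.Coprime (p.lcm q) → a ≡ 1 [MOD q] ∨ q ∣ a + 1 → a ≡ 1 [MOD p] ∨ p ∣ a + 1) :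
    p ∣ q := by
  have hpq := not_coprime_of_forall_modEq_one hp hp5 fun a ha h1 => h a ha (Or.inl h1)
  have hker : ∀ a, a.Coprime (p.lcm q) → a ≡ 1 [MOD q] → a ≡ 1 [MOD p] := by
    refine fun a ha h1 => (h a ha (Or.inl h1)).resolve_right fun hdvd => hpq ?_
    have hg2 : p.gcd q ∣ 2 :=
      (((h1.of_dvd (Nat.gcd_dvd_right p q)).add_right 1).dvd_iff dvd_rfl).1
        ((Nat.gcd_dvd_left p q).trans hdvd)
    rcases (Nat.dvd_prime Nat.prime_two).1 hg2 with hg | hg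
    · exact hg
    · have h2p : 2 ∣ p := hg ▸ Nat.gcd_dvd_left p q
      have h2q : 2 ∣ q := hg ▸ Nat.gcd_dvd_right p q
      have h4 : 4 ∣ p.gcd q := Nat.dvd_gcd (by omega) (by omega)
      omega
  have htot := totient_lcm_eq_of_forall_modEq_one (by omega) hq0 hker
  rcases Nat.eq_or_eq_of_totient_eq_totient (Nat.dvd_lcm_right p q) htot.symm with hl | hl
  · exact hl ▸ Nat.dvd_lcm_left p q
  · have hp2q : p ∣ 2 * q := hl ▸ Nat.dvd_lcm_left p q
    rcases Nat.even_or_odd p with hev | hodd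
    · have h4p : 4 ∣ p := by rcases hev with ⟨r, hr⟩; omega
      have hqev : Even q := by
        obtain ⟨s, hs⟩ := h4p.trans hp2q
        exact ⟨s, by omega⟩
      have := hqev.eq_of_totient_eq_totient (Nat.dvd_lcm_right p q) htot.symm
      omega
    · exact (Nat.coprime_two_right.2 hodd).dvd_of_dvd_mul_left hp2q

theorem eq_of_forall_modEq_one_or_dvd_add_one_iff {p q : ℕ} (hp : p % 4 ≠ 2) (hq : q % 4 ≠ 2)
    (hp5 : 5 ≤ p) (hq5 : 5 ≤ q)
    (h : ∀ a, a.Coprime (p.lcm q) → (a ≡ 1 [MOD p] ∨ p ∣ a + 1 ↔ a ≡ 1 [MOD q] ∨ q ∣ a + 1)) :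
    p = q :=
  Nat.dvd_antisymm
    (dvd_of_forall_modEq_one_or_dvd_add_one hp hp5 hq (by omega) fun a ha => (h a ha).2)
    (dvd_of_forall_modEq_one_or_dvd_add_one hq hq5 hp (by omega) fun a ha =>
      (h a (Nat.lcm_comm q p ▸ ha)).1)

theorem maximal_real_subfield_determines_Q_up_to_two_general
    (m n : ℕ) (hn : 0 < n) (hlt : n < m)
    (hm' : m ∉ ({1, 2, 3, 4, 6} : Set ℕ)) (hn' : n ∉ ({1, 2, 3, 4, 6} : Set ℕ))
    (ζm : ℂ) (hζm : ζm = Complex.exp (2 * Real.pi * Complex.I / m))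
    (ζn : ℂ) (hζn : ζn = Complex.exp (2 * Real.pi * Complex.I / n))
    (h : ℚ⟮ζm + ζm⁻¹⟯ = ℚ⟮ζn + ζn⁻¹⟯) :
    Odd n ∧ m = 2 * n := by
  simp only [Set.mem_insert_iff, Set.mem_singleton_iff, not_or] at hm' hn'
  obtain ⟨p, ξ, hξ, hξm, hp4, hpm⟩ :=
    (hζm ▸ Complex.isPrimitiveRoot_exp m (by omega)).exists_adjoin_add_inv_eq_mod_four_ne_two ℚ
  obtain ⟨q, η, hη, hηn, hq4, hqn⟩ :=
    (hζn ▸ Complex.isPrimitiveRoot_exp n hn.ne').exists_adjoin_add_inv_eq_mod_four_ne_two ℚ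
  have hp5 : 5 ≤ p := by rcases hpm with rfl | ⟨rfl, ⟨r, rfl⟩⟩ <;> omega
  have hq5 : 5 ≤ q := by rcases hqn with rfl | ⟨rfl, ⟨r, rfl⟩⟩ <;> omega
  obtain rfl : p = q := eq_of_forall_modEq_one_or_dvd_add_one_iff hp4 hq4 hp5 hq5 fun a ha =>
    hξ.modEq_one_or_dvd_add_one_iff_of_adjoin_eq hη
      (Complex.isPrimitiveRoot_exp _ (Nat.lcm_ne_zero (by omega) (by omega))) (by omega) (by omega)
      (by rw [hξm, hηn, h]) ha
  rcases hpm with rfl | ⟨rfl, hodd⟩ <;> rcases hqn with rfl | ⟨rfl, -⟩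
  · omega
  · omega
  · exact ⟨hodd, rfl⟩
  · omega

/-- If `m, n` are positive integers with `n < m`, neither belonging to `{1,2,3,4,6}`,
and `ℚ(ζ_m + ζ_m⁻¹) = ℚ(ζ_n + ζ_n⁻¹)` as subfields of `ℂ`, then `n` is odd and `m = 2n`.
(The maximal real subfield of a cyclotomic field determines the conductor up to a factor of 2.) -/
theorem maximal_real_subfield_determines_Q_up_to_two
    (m n : ℕ) (hm : 0 < m) (hn : 0 < n) (hlt : n < m)
    (hm' : m ∉ ({1, 2, 3, 4, 6} : Set ℕ)) (hn' : n ∉ ({1, 2, 3, 4, 6} : Set ℕ))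
    (ζm : ℂ) (hζm : ζm = Complex.exp (2 * Real.pi * Complex.I / m))
    (ζn : ℂ) (hζn : ζn = Complex.exp (2 * Real.pi * Complex.I / n))
    (h : ℚ⟮ζm + ζm⁻¹⟯ = ℚ⟮ζn + ζn⁻¹⟯) :
    Odd n ∧ m = 2 * n :=
  maximal_real_subfield_determines_Q_up_to_two_general m n hn hlt hm' hn' ζm hζm ζn hζn h
end

section
/- Let m be a natural number with m ≥ 5 and m ≠ 6, and let p be an odd prime dividing m. Let K = ℚ(ζ_m + ζ_m⁻¹), viewed as a subfield of ℂ (a number field). Then p ramifies in K; that is, there exists a nonzero prime ideal P of the ring of integers 𝓞_K of K lying over p whose ramification index over p is at least 2. -/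
/-!
Let `ξ` be a primitive `p^(k+1)`-th root of unity with `φ(p^(k+1)) = 2d`. Since
`p = Φ_{p^(k+1)}(1) = ∏ (1 - μ)` over the primitive roots `μ`, all associated to `1 - ξ`, the real
algebraic integer `x = (1 - ξ)(1 - ξ⁻¹) ~ (1 - ξ)²` satisfies `x^d ~ p`. For an odd prime `p ∣ m`
we can take `d ≥ 2`, except when `p = 3` exactly divides `m`. Then `m = 3m'` with `m' ≥ 4`, and
`ζ_m - ζ_m⁻¹ = -ζ_m⁻¹(1 - ζ_m²)` is a unit because the order of `ζ_m²` is not a prime power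
(so `Φ(1) = 1`); with `ω` a primitive cube root of unity, `(ω - ω⁻¹)² = -3` makes the real
`x = (ω - ω⁻¹)(ζ_m - ζ_m⁻¹)` satisfy `x² ~ 3`. In both cases `x` lies in `ℚ(ζ_m + ζ_m⁻¹)`, and
`p ∈ P²` for any prime `P` of its ring of integers containing `x`.
-/

open IntermediateField NumberField

open Polynomial in
theorem pow_add_inv_pow_mem_adjoin {F E : Type*} [Field F] [Field E] [Algebra F E] {z : E}
    (hz : z ≠ 0) (k : ℕ) : z ^ k + z⁻¹ ^ k ∈ F⟮z + z⁻¹⟯ := by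
  have h := dickson_one_one_eval_add_inv z z⁻¹ (mul_inv_cancel₀ hz) k
  rw [← map_one (algebraMap F E), ← map_dickson, eval_map_algebraMap] at h
  rw [← h, ← Subtype.coe_mk (z + z⁻¹) (mem_adjoin_simple_self F _), aeval_coe]
  exact SetLike.coe_mem _

namespace Ideal

variable {R S : Type*} [CommRing R] [CommRing S] [Algebra R S] [IsDedekindDomain S]

theorem two_le_ramificationIdx' {p : Ideal R} {P : Ideal S} [P.IsPrime]
    (hp : map (algebraMap R S) p ≠ ⊥) (hpP : map (algebraMap R S) p ≤ P ^ 2) :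
    2 ≤ ramificationIdx' p P := by
  have hle : map (algebraMap R S) p ≤ P := hpP.trans (pow_le_self two_ne_zero)
  have h0 := IsDedekindDomain.ramificationIdx'_ne_zero hp ‹_› hle
  have h1 := (ramificationIdx'_ne_one_iff hle).2 hpP
  omega

theorem exists_two_le_ramificationIdx'_of_eq_sq_mul {a : R} (ha : algebraMap R S a ≠ 0)
    {x y : S} (hx : ¬IsUnit x) (hxy : algebraMap R S a = x ^ 2 * y) :
    ∃ P : Ideal S, P ≠ ⊥ ∧ P.IsPrime ∧ algebraMap R S a ∈ P ∧
      2 ≤ ramificationIdx' (span {a}) P := by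
  obtain ⟨P, hP, hxP⟩ := exists_max_ideal_of_mem_nonunits hx
  have := hP.isPrime
  have haP2 : algebraMap R S a ∈ P ^ 2 := hxy ▸ mul_mem_right _ _ (pow_mem_pow hxP 2)
  have hmap : map (algebraMap R S) (span {a}) = span {algebraMap R S a} := by
    rw [map_span, Set.image_singleton]
  refine ⟨P, ?_, hP.isPrime, pow_le_self two_ne_zero haP2, ?_⟩
  · rintro rfl
    exact ha (by simpa using pow_le_self two_ne_zero haP2)
  · refine two_le_ramificationIdx' ?_ ?_ <;> rw [hmap]
    · simpa using ha
    · simpa [span_singleton_le_iff_mem] using haP2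

end Ideal

theorem Nat.ne_prime_pow_of_dvd {q e n : ℕ} (hq : q.Prime) (hqn : q ∣ n) (hen : e ∣ n)
    (he : e ≠ 1) (hqe : ¬q ∣ e) : ∀ {p : ℕ}, p.Prime → ∀ k : ℕ, p ^ k ≠ n := by
  rintro p hp k rfl
  obtain rfl : q = p := (Nat.prime_dvd_prime_iff_eq hq hp).1 (hq.dvd_of_dvd_pow hqn)
  obtain ⟨i, -, rfl⟩ := (Nat.dvd_prime_pow hq).1 hen
  rcases i with _ | i
  · exact he (pow_zero q)
  · exact hqe (dvd_pow_self q i.succ_ne_zero)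

theorem Nat.exists_prime_pow_dvd_totient_eq_two_mul {p m : ℕ} (hp : p.Prime) (hodd : Odd p)
    (hpm : p ∣ m) (h9 : p = 3 → 9 ∣ m) :
    ∃ k d, p ^ (k + 1) ∣ m ∧ 2 ≤ d ∧ (p ^ (k + 1)).totient = 2 * d := by
  by_cases hp3 : p = 3
  · subst hp3
    exact ⟨1, 3, h9 rfl, by norm_num, by decide⟩
  · obtain ⟨t, rfl⟩ := hodd
    have := hp.two_le
    exact ⟨0, t, by simpa using hpm, by omega, by rw [pow_one, Nat.totient_prime hp]; omega⟩

namespace IsPrimitiveRoot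

section IsDomain

variable {A : Type*} [CommRing A] [IsDomain A] {ξ : A} {n : ℕ}

open Polynomial in
theorem prod_one_sub_primitiveRoots (hξ : IsPrimitiveRoot ξ n) :
    ∏ μ ∈ primitiveRoots n A, (1 - μ) = (cyclotomic n A).eval 1 := by
  simp [cyclotomic_eq_prod_X_sub_primitiveRoots hξ, eval_prod]

theorem associated_one_sub_of_isPrimitiveRoot [NeZero n] (hξ : IsPrimitiveRoot ξ n) {μ : A}
    (hμ : IsPrimitiveRoot μ n) : Associated (1 - ξ) (1 - μ) := by
  obtain ⟨j, -, hj, rfl⟩ := hξ.isPrimitiveRoot_iff.1 hμ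
  simpa only [neg_sub] using (hξ.associated_sub_one_pow_sub_one_of_coprime hj).neg_left.neg_right

theorem associated_one_sub_pow_totient {p k : ℕ} (hp : p.Prime)
    (hξ : IsPrimitiveRoot ξ (p ^ (k + 1))) :
    Associated ((1 - ξ) ^ (p ^ (k + 1)).totient) (p : A) := by
  have : Fact p.Prime := ⟨hp⟩
  have hpos : 0 < p ^ (k + 1) := pow_pos hp.pos _
  have : NeZero (p ^ (k + 1)) := ⟨hpos.ne'⟩
  rw [← hξ.card_primitiveRoots, ← Finset.prod_const,
    ← Polynomial.eval_one_cyclotomic_prime_pow (R := A) k, ← hξ.prod_one_sub_primitiveRoots]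
  exact Associated.prod _ _ _ fun μ hμ =>
    hξ.associated_one_sub_of_isPrimitiveRoot ((mem_primitiveRoots hpos).1 hμ)

theorem isUnit_one_sub (hξ : IsPrimitiveRoot ξ n) (hn0 : 0 < n)
    (hn : ∀ {p : ℕ}, p.Prime → ∀ k : ℕ, p ^ k ≠ n) : IsUnit (1 - ξ) := by
  have hprod : ∏ μ ∈ primitiveRoots n A, (1 - μ) = 1 := by
    rw [hξ.prod_one_sub_primitiveRoots, Polynomial.eval_one_cyclotomic_not_prime_pow hn]
  have hdvd : 1 - ξ ∣ ∏ μ ∈ primitiveRoots n A, (1 - μ) :=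
    Finset.dvd_prod_of_mem (fun μ => 1 - μ) ((mem_primitiveRoots hn0).2 hξ)
  rw [hprod] at hdvd
  exact isUnit_of_dvd_one hdvd

theorem associated_one_sub_mul_one_sub_inv_pow {p k d : ℕ} (hp : p.Prime)
    (hξ : IsPrimitiveRoot ξ (p ^ (k + 1))) {ξ' : A} (hξξ' : ξ * ξ' = 1)
    (hd : (p ^ (k + 1)).totient = 2 * d) :
    Associated (((1 - ξ) * (1 - ξ')) ^ d) (p : A) := by
  have hx : (1 - ξ) * (1 - ξ') = (1 - ξ) ^ 2 * -ξ' := by linear_combination (ξ - 1) * hξξ'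
  rw [hx]
  refine (associated_mul_unit_left _ _ (IsUnit.of_mul_eq_one_right ξ hξξ').neg).pow_pow.trans ?_
  rw [← pow_mul, ← hd]
  exact hξ.associated_one_sub_pow_totient hp

theorem associated_sq_mul_sq_three {ω ω' η η' : A} (hω : IsPrimitiveRoot ω 3)
    (hωω' : ω * ω' = 1) (hηη' : η * η' = 1) (hη : IsUnit (1 - η ^ 2)) :
    Associated (((ω - ω') * (η - η')) ^ 2) 3 := by
  have hsum : 1 + ω + ω ^ 2 = 0 := by
    simpa [Finset.sum_range_succ] using hω.geom_sum_eq_zero (by norm_num)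
  have hsq : (ω - ω') ^ 2 = -3 := by
    linear_combination hsum - ω' ^ 2 * hω.pow_eq_one + (ω * (ω * ω' + 1) - 2) * hωω'
  have hunit : IsUnit (-(η - η') ^ 2) := by
    rw [show η - η' = (1 - η ^ 2) * -η' by linear_combination (-η) * hηη']
    exact ((hη.mul (IsUnit.of_mul_eq_one_right η hηη').neg).pow 2).neg
  rw [mul_pow, hsq, neg_mul, ← mul_neg]
  exact associated_mul_unit_left _ _ hunit

end IsDomain

theorem exists_sq_isPrimitiveRoot_of_three_mul {M : Type*} [CommMonoid M] {ζ : M} {m : ℕ}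
    (hζ : IsPrimitiveRoot ζ (3 * m)) (hm : 4 ≤ m) (h3 : ¬3 ∣ m) :
    ∃ d, 0 < d ∧ IsPrimitiveRoot (ζ ^ 2) d ∧ ∀ {p : ℕ}, p.Prime → ∀ k : ℕ, p ^ k ≠ d := by
  rcases Nat.even_or_odd m with ⟨c, rfl⟩ | hodd
  · refine ⟨3 * c, by omega, hζ.pow (by omega) (by ring), ?_⟩
    exact Nat.ne_prime_pow_of_dvd Nat.prime_three (dvd_mul_right 3 c) (dvd_mul_left c 3)
      (by omega) fun h => h3 (h.trans (Dvd.intro 2 (by ring)))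
  · refine ⟨3 * m, by omega, hζ.pow_of_coprime 2 ?_, Nat.ne_prime_pow_of_dvd Nat.prime_three
      (dvd_mul_right 3 m) (dvd_mul_left m 3) (by omega) h3⟩
    exact Nat.Coprime.mul_right (by norm_num) (Nat.coprime_two_left.2 hodd)

end IsPrimitiveRoot

namespace NumberField.RingOfIntegers

variable {L : Type*} [Field L] [CharZero L] (K : IntermediateField ℚ L)

def toIntegralClosure : 𝓞 K →+* integralClosure ℤ L :=
  ((algebraMap K L).comp (algebraMap (𝓞 K) K)).codRestrict (integralClosure ℤ L).toSubring
    fun X => X.isIntegral_coe.algebraMap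

variable {K}

theorem toIntegralClosure_injective : Function.Injective (toIntegralClosure K) :=
  fun _ _ h => RingOfIntegers.coe_injective (Subtype.val_injective (congrArg Subtype.val h :))

theorem exists_toIntegralClosure_eq {z : integralClosure ℤ L} (hz : (z : L) ∈ K) :
    ∃ X : 𝓞 K, toIntegralClosure K X = z :=
  ⟨⟨⟨z, hz⟩, (isIntegral_algebraMap_iff (algebraMap K L).injective).1 z.2⟩, rfl⟩

end NumberField.RingOfIntegers

section IntegralClosure

variable {L : Type*} [Field L]

theorem not_isUnit_natCast_integralClosure [CharZero L] {p : ℕ} (hp : p.Prime) :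
    ¬IsUnit (p : integralClosure ℤ L) := fun h =>
  (Nat.prime_iff_prime_int.1 hp).not_isUnit
    (isUnit_of_map_unit (algebraMap ℤ (integralClosure ℤ L)) _ (by simpa using h))

theorem exists_two_le_ramificationIdx'_of_associated [CharZero L] {K : IntermediateField ℚ L}
    [FiniteDimensional ℚ K] {p n : ℕ} (hp : p.Prime) (hn : 2 ≤ n) {x : integralClosure ℤ L}
    (hxK : (x : L) ∈ K) (hxp : Associated (x ^ n) (p : integralClosure ℤ L)) :
    ∃ P : Ideal (𝓞 K), P ≠ ⊥ ∧ P.IsPrime ∧ (p : 𝓞 K) ∈ P ∧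
      2 ≤ Ideal.ramificationIdx' (Ideal.span {(p : ℤ)}) P := by
  have : NumberField K := ⟨⟩
  have hx : ¬IsUnit x := fun h =>
    not_isUnit_natCast_integralClosure hp (hxp.isUnit_iff.1 (h.pow n))
  obtain ⟨y, hxy⟩ := (pow_dvd_pow x hn).trans hxp.dvd
  have hyK : (y : L) ∈ K := by
    have hxyL : (p : L) = x ^ 2 * y := by simpa using congrArg Subtype.val hxy
    have hx0 : (x : L) ≠ 0 := by rintro h; simp [h, hp.ne_zero] at hxyL
    rw [eq_div_of_mul_eq (pow_ne_zero 2 hx0) (hxyL.trans (mul_comm _ _)).symm]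
    exact div_mem (IntermediateField.natCast_mem K p) (pow_mem hxK 2)
  obtain ⟨X, rfl⟩ := RingOfIntegers.exists_toIntegralClosure_eq hxK
  obtain ⟨Y, rfl⟩ := RingOfIntegers.exists_toIntegralClosure_eq hyK
  have hpXY : algebraMap ℤ (𝓞 K) p = X ^ 2 * Y :=
    RingOfIntegers.toIntegralClosure_injective (by simpa using hxy)
  simpa using Ideal.exists_two_le_ramificationIdx'_of_eq_sq_mul (by simpa using hp.ne_zero)
    (fun h => hx (h.map _)) hpXY

variable {ζ : L} {m : ℕ}

theorem IsPrimitiveRoot.exists_lift_integralClosure (hζ : IsPrimitiveRoot ζ m) (hm : 0 < m) :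
    ∃ Z Z' : integralClosure ℤ L, (Z : L) = ζ ∧ (Z' : L) = ζ⁻¹ ∧ IsPrimitiveRoot Z m ∧
      Z * Z' = 1 :=
  ⟨⟨ζ, hζ.isIntegral hm⟩, ⟨ζ⁻¹, hζ.inv.isIntegral hm⟩, rfl, rfl,
    hζ.of_map_of_injective (f := (integralClosure ℤ L).val) Subtype.val_injective,
    Subtype.ext (mul_inv_cancel₀ (hζ.ne_zero hm.ne'))⟩

variable [CharZero L]

theorem IsPrimitiveRoot.exists_associated_pow_of_prime_pow_dvd (hζ : IsPrimitiveRoot ζ m)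
    (hm : 0 < m) {p k d : ℕ} (hp : p.Prime) (hpm : p ^ (k + 1) ∣ m)
    (hd : (p ^ (k + 1)).totient = 2 * d) :
    ∃ x : integralClosure ℤ L, (x : L) ∈ ℚ⟮ζ + ζ⁻¹⟯ ∧
      Associated (x ^ d) (p : integralClosure ℤ L) := by
  obtain ⟨Z, Z', rfl, hZ', hZ, hZZ'⟩ := hζ.exists_lift_integralClosure hm
  obtain ⟨j, rfl⟩ := hpm
  refine ⟨(1 - Z ^ j) * (1 - Z' ^ j), ?_,
    (hZ.pow hm (mul_comm _ _)).associated_one_sub_mul_one_sub_inv_pow hp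
      (by rw [← mul_pow, hZZ', one_pow]) hd⟩
  have hj : (Z : L) ^ j * (Z : L)⁻¹ ^ j = 1 := by
    rw [← mul_pow, mul_inv_cancel₀ (hζ.ne_zero hm.ne'), one_pow]
  have hx : (((1 - Z ^ j) * (1 - Z' ^ j) : integralClosure ℤ L) : L) =
      2 - ((Z : L) ^ j + (Z : L)⁻¹ ^ j) := by
    push_cast
    rw [hZ']
    linear_combination hj
  rw [hx]
  exact sub_mem (ofNat_mem _ 2) (pow_add_inv_pow_mem_adjoin (hζ.ne_zero hm.ne') j)

theorem IsPrimitiveRoot.exists_associated_sq_three (hζ : IsPrimitiveRoot ζ (3 * m))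
    (hm : 4 ≤ m) (h3 : ¬3 ∣ m) :
    ∃ x : integralClosure ℤ L, (x : L) ∈ ℚ⟮ζ + ζ⁻¹⟯ ∧ Associated (x ^ 2) 3 := by
  obtain ⟨Z, Z', rfl, hZ', hZ, hZZ'⟩ := hζ.exists_lift_integralClosure (by omega)
  obtain ⟨d, hd0, hZd, hd⟩ := hZ.exists_sq_isPrimitiveRoot_of_three_mul hm h3
  refine ⟨(Z ^ m - Z' ^ m) * (Z - Z'), ?_,
    (hZ.pow (by omega) (mul_comm _ _)).associated_sq_mul_sq_three
      (by rw [← mul_pow, hZZ', one_pow]) hZZ' (hZd.isUnit_one_sub hd0 hd)⟩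
  obtain ⟨c, rfl⟩ : ∃ c, m = c + 1 := ⟨m - 1, by omega⟩
  have hζ1 : (Z : L) * (Z : L)⁻¹ = 1 := mul_inv_cancel₀ (hζ.ne_zero (by omega))
  have hx : (((Z ^ (c + 1) - Z' ^ (c + 1)) * (Z - Z') : integralClosure ℤ L) : L) =
      ((Z : L) ^ (c + 2) + (Z : L)⁻¹ ^ (c + 2)) - ((Z : L) ^ c + (Z : L)⁻¹ ^ c) := by
    push_cast
    rw [hZ']
    linear_combination (-(Z : L) ^ c - (Z : L)⁻¹ ^ c) * hζ1
  rw [hx]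
  exact sub_mem (pow_add_inv_pow_mem_adjoin (hζ.ne_zero (by omega)) _)
    (pow_add_inv_pow_mem_adjoin (hζ.ne_zero (by omega)) _)

theorem IsPrimitiveRoot.exists_associated_pow_of_odd_prime_dvd (hζ : IsPrimitiveRoot ζ m)
    (hm : 5 ≤ m) (hm6 : m ≠ 6) {p : ℕ} (hp : p.Prime) (hodd : Odd p) (hpm : p ∣ m) :
    ∃ x : integralClosure ℤ L, ∃ n, 2 ≤ n ∧ (x : L) ∈ ℚ⟮ζ + ζ⁻¹⟯ ∧
      Associated (x ^ n) (p : integralClosure ℤ L) := by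
  by_cases h9 : p = 3 ∧ ¬9 ∣ m
  · obtain ⟨rfl, h9⟩ := h9
    obtain ⟨m', rfl⟩ := hpm
    have h3 : ¬3 ∣ m' := fun ⟨c, hc⟩ => h9 ⟨c, by omega⟩
    obtain ⟨x, hxK, hx⟩ := hζ.exists_associated_sq_three (by omega) h3
    exact ⟨x, 2, le_refl 2, hxK, by exact_mod_cast hx⟩
  · obtain ⟨k, d, hpk, hd, htot⟩ :=
      Nat.exists_prime_pow_dvd_totient_eq_two_mul hp hodd hpm fun h => not_and_not_right.1 h9 h
    obtain ⟨x, hxK, hx⟩ := hζ.exists_associated_pow_of_prime_pow_dvd (by omega) hp hpk htot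
    exact ⟨x, d, hd, hxK, hx⟩

end IntegralClosure

/-- If `m ≥ 5`, `m ≠ 6`, and `p` is an odd prime dividing `m`, then `p` ramifies in
`K = ℚ(ζ_m + ζ_m⁻¹)`: there is a nonzero prime ideal of `𝓞_K` lying over `p` whose
ramification index over `p` is at least `2`. -/
theorem odd_prime_ramifies_in_maximal_real_subfield
    (m : ℕ) (hm : 5 ≤ m) (hm6 : m ≠ 6)
    (p : ℕ) (hp : p.Prime) (hodd : Odd p) (hpm : p ∣ m)
    (ζ : ℂ) (hζ : ζ = Complex.exp (2 * Real.pi * Complex.I / m))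
    (K : IntermediateField ℚ ℂ) (hK : K = ℚ⟮ζ + ζ⁻¹⟯) :
    ∃ P : Ideal (NumberField.RingOfIntegers K),
      P ≠ ⊥ ∧ P.IsPrime ∧ (p : NumberField.RingOfIntegers K) ∈ P ∧
      2 ≤ Ideal.ramificationIdx'
            (Ideal.span {(p : ℤ)}) P := by
  subst hK
  have hζm : IsPrimitiveRoot ζ m := hζ ▸ Complex.isPrimitiveRoot_exp m (by omega)
  have : FiniteDimensional ℚ ℚ⟮ζ + ζ⁻¹⟯ := adjoin.finiteDimensional
    ((hζm.isIntegral (by omega)).add (hζm.inv.isIntegral (by omega))).tower_top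
  obtain ⟨x, n, hn, hxK, hx⟩ := hζm.exists_associated_pow_of_odd_prime_dvd hm hm6 hp hodd hpm
  exact exists_two_le_ramificationIdx'_of_associated hp hn hxK hx
end

section
/- Let b₁, b₂, b₃ be positive integers with gcd(b₁,b₂,b₃) = 1, set Q = b₁ + b₂ + b₃, and suppose Q is even. If 4·(Σ_{i : b_i ∣ Q} b_i) ≥ 3Q, i.e. the sum of those b_i (counted with multiplicity) which divide Q is at least 3Q/4, then the multiset {b₁, b₂, b₃} equals {1,1,2}, {1,2,3}, or {3,4,5}. -/
/-!
A proper divisor of `Q` is at most `Q / 2`, so at least two of the `bᵢ` must divide `Q`; writing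
them as `Q / m` and `Q / n` with `m, n ∈ {2, 3, 4}`, the remainder `Q - Q/m - Q/n` is then `Q / k`
as well, so all three divide `Q`. Their cofactors are then an Egyptian-fraction decomposition
`1 = 1/m + 1/n + 1/p`, i.e. `{2, 3, 6}`, `{2, 4, 4}` or `{3, 3, 3}`; coprimality makes the smallest
entry `1`, and the last case has `Q = 3` odd.
-/

theorem exists_cofactor_of_dvd_of_lt {a Q k : ℕ} (h : a ∣ Q) (hlt : a < Q) (hle : Q ≤ k * a) :
    ∃ m, 2 ≤ m ∧ m ≤ k ∧ Q = a * m := by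
  obtain ⟨m, rfl⟩ := h
  have ha : 0 < a := Nat.pos_of_ne_zero (by rintro rfl; simp at hlt)
  refine ⟨m, Nat.lt_of_mul_lt_mul_left (by simpa using hlt), ?_, rfl⟩
  exact Nat.le_of_mul_le_mul_left (by simpa [mul_comm k] using hle) ha

theorem two_mul_le_of_dvd_of_lt {a Q : ℕ} (h : a ∣ Q) (hlt : a < Q) : 2 * a ≤ Q := by
  obtain ⟨m, rfl⟩ := h
  have hm : 2 ≤ m := Nat.lt_of_mul_lt_mul_left (by simpa using hlt)
  calc 2 * a = a * 2 := mul_comm 2 a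
    _ ≤ a * m := Nat.mul_le_mul_left a hm

theorem eq_one_of_gcd_eq_one {a b c : ℕ} (hgcd : Nat.gcd (Nat.gcd a b) c = 1) (hb : a ∣ b)
    (hc : a ∣ c) : a = 1 :=
  Nat.dvd_one.mp (hgcd ▸ Nat.dvd_gcd (Nat.dvd_gcd dvd_rfl hb) hc)

theorem dvd_of_dvd_of_dvd_of_three_mul_le {a b c Q : ℕ} (hc : 0 < c) (hQ : a + b + c = Q)
    (ha : a ∣ Q) (hb : b ∣ Q) (h : 3 * Q ≤ 4 * (a + b)) : c ∣ Q := by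
  have ha2 := two_mul_le_of_dvd_of_lt ha (by omega)
  have hb2 := two_mul_le_of_dvd_of_lt hb (by omega)
  obtain ⟨m, hm2, hm4, hm⟩ := exists_cofactor_of_dvd_of_lt ha (by omega) (k := 4) (by omega)
  obtain ⟨n, hn2, hn4, hn⟩ := exists_cofactor_of_dvd_of_lt hb (by omega) (k := 4) (by omega)
  -- In the cases that survive `3/4 ≤ 1/m + 1/n`, `c` is `Q / 6` or `Q / 4`.
  interval_cases m <;> interval_cases n <;>
    first
      | omega
      | exact ⟨6, by omega⟩
      | exact ⟨4, by omega⟩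

theorem all_dvd_of_three_mul_le {a b c : ℕ} (ha : 0 < a) (hb : 0 < b) (hc : 0 < c)
    (hsum : 4 * ((if a ∣ (a + b + c) then a else 0) +
                 (if b ∣ (a + b + c) then b else 0) +
                 (if c ∣ (a + b + c) then c else 0)) ≥ 3 * (a + b + c)) :
    a ∣ a + b + c ∧ b ∣ a + b + c ∧ c ∣ a + b + c := by
  split_ifs at hsum with hda hdb hdc hdc hdb hdc hdc
  · exact ⟨hda, hdb, hdc⟩
  · exact absurd (dvd_of_dvd_of_dvd_of_three_mul_le hc rfl hda hdb (by omega)) hdc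
  · exact absurd (dvd_of_dvd_of_dvd_of_three_mul_le hb (by omega) hda hdc (by omega)) hdb
  · have := two_mul_le_of_dvd_of_lt hda (by omega); omega
  · exact absurd (dvd_of_dvd_of_dvd_of_three_mul_le ha (by omega) hdb hdc (by omega)) hda
  · have := two_mul_le_of_dvd_of_lt hdb (by omega); omega
  · have := two_mul_le_of_dvd_of_lt hdc (by omega); omega
  · omega

theorem eq_of_sorted_of_dvd {a b c Q : ℕ} (ha : 0 < a) (hab : a ≤ b) (hbc : b ≤ c)
    (hgcd : Nat.gcd (Nat.gcd a b) c = 1) (hQ : a + b + c = Q) (heven : 2 ∣ Q)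
    (hb : b ∣ Q) (hc : c ∣ Q) :
    (a = 1 ∧ b = 1 ∧ c = 2) ∨ (a = 1 ∧ b = 2 ∧ c = 3) := by
  obtain ⟨p, hp2, hp3, hp⟩ := exists_cofactor_of_dvd_of_lt hc (by omega) (k := 3) (by omega)
  interval_cases p
  · obtain ⟨n, hn2, hn4, hn⟩ := exists_cofactor_of_dvd_of_lt hb (by omega) (k := 4) (by omega)
    interval_cases n
    · omega
    · have := eq_one_of_gcd_eq_one hgcd ⟨2, by omega⟩ ⟨3, by omega⟩
      omega
    · have := eq_one_of_gcd_eq_one hgcd ⟨1, by omega⟩ ⟨2, by omega⟩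
      omega
  · have := eq_one_of_gcd_eq_one hgcd ⟨1, by omega⟩ ⟨1, by omega⟩
    omega

theorem multiset_eq_of_dvd {a b c Q : ℕ} (ha : 0 < a) (hb : 0 < b) (hc : 0 < c)
    (hgcd : Nat.gcd (Nat.gcd a b) c = 1) (hQ : a + b + c = Q) (heven : 2 ∣ Q)
    (hda : a ∣ Q) (hdb : b ∣ Q) (hdc : c ∣ Q) :
    ({a, b, c} : Multiset ℕ) = {1, 1, 2} ∨ ({a, b, c} : Multiset ℕ) = {1, 2, 3} := by
  wlog hab : a ≤ b generalizing a b c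
  · have hperm : ({b, a, c} : Multiset ℕ) = {a, b, c} := Multiset.cons_swap _ _ _
    rw [← hperm]
    exact this hb ha hc (by rwa [Nat.gcd_comm b a]) (by omega) hdb hda hdc (by omega)
  wlog hac : a ≤ c generalizing a b c
  · have hperm : ({c, a, b} : Multiset ℕ) = {a, b, c} :=
      (Multiset.cons_swap c a _).trans (congrArg (a ::ₘ ·) (Multiset.pair_comm c b))
    rw [← hperm]
    exact this hc ha hb (by rwa [Nat.gcd_comm c a, Nat.gcd_right_comm]) (by omega) hdc hda hdb
      (by omega) (by omega)
  wlog hbc : b ≤ c generalizing a b c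
  · have hperm : ({a, c, b} : Multiset ℕ) = {a, b, c} :=
      congrArg (a ::ₘ ·) (Multiset.pair_comm c b)
    rw [← hperm]
    exact this ha hc hb (by rwa [Nat.gcd_right_comm]) (by omega) hda hdc hdb (by omega)
      (by omega) (by omega)
  rcases eq_of_sorted_of_dvd ha hab hbc hgcd hQ heven hdb hdc with
    ⟨rfl, rfl, rfl⟩ | ⟨rfl, rfl, rfl⟩
  · exact Or.inl rfl
  · exact Or.inr rfl

/-- If `gcd(b₁,b₂,b₃) = 1`, `Q = b₁+b₂+b₃` is even, and the sum (with multiplicity) of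
those `bᵢ` dividing `Q` is at least `3Q/4`, then `{b₁,b₂,b₃}` is `{1,1,2}`, `{1,2,3}`,
or `{3,4,5}` as a multiset. -/
theorem even_Q_triples_with_three_quarters_nonsingular
    (b₁ b₂ b₃ : ℕ) (h₁ : 0 < b₁) (h₂ : 0 < b₂) (h₃ : 0 < b₃)
    (hgcd : Nat.gcd (Nat.gcd b₁ b₂) b₃ = 1)
    (heven : 2 ∣ (b₁ + b₂ + b₃))
    (hsum : 4 * ((if b₁ ∣ (b₁ + b₂ + b₃) then b₁ else 0) +
                 (if b₂ ∣ (b₁ + b₂ + b₃) then b₂ else 0) +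
                 (if b₃ ∣ (b₁ + b₂ + b₃) then b₃ else 0)) ≥ 3 * (b₁ + b₂ + b₃)) :
    ({b₁, b₂, b₃} : Multiset ℕ) = {1, 1, 2} ∨
    ({b₁, b₂, b₃} : Multiset ℕ) = {1, 2, 3} ∨
    ({b₁, b₂, b₃} : Multiset ℕ) = {3, 4, 5} := by
  obtain ⟨d₁, d₂, d₃⟩ := all_dvd_of_three_mul_le h₁ h₂ h₃ hsum
  exact (multiset_eq_of_dvd h₁ h₂ h₃ hgcd rfl heven d₁ d₂ d₃).imp_right Or.inl
end

section
/- Let b₁, b₂, b₃ be positive integers with gcd(b₁,b₂,b₃) = 1, set Q = b₁ + b₂ + b₃, and suppose Q is odd. If b₁ ∣ Q, b₂ ∣ Q, b₃ ∤ Q, and 2·b₃ ≤ Q, then the multiset {b₁, b₂, b₃} equals {3,5,7}. -/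
/-!
Write `Q = b₁ + b₂ + b₃ = b₁ m = b₂ n`. Since `Q` is odd, the cofactors `m` and `n` are odd, and
both exceed `1`. The condition `2 b₃ ≤ Q` says `Q ≤ 2 (b₁ + b₂) = 2Q/m + 2Q/n`, i.e.
`(m - 2)(n - 2) ≤ 4`, which leaves only `{m, n} = {3, 3}` or `{3, 5}`. The first forces
`b₃ = b₁ ∣ Q`; the second forces `(b₁, b₂, b₃)` to be a multiple of `(5, 3, 7)` in some order,
and the gcd condition makes it exactly that.
-/

theorem three_le_of_odd_mul_of_lt_mul {a m : ℕ} (h : Odd (a * m)) (hlt : a < a * m) : 3 ≤ m := by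
  have hm : m % 2 = 1 := Nat.odd_iff.mp (Nat.odd_mul.mp h).2
  have hm1 : m ≠ 1 := by rintro rfl; simp at hlt
  omega

theorem mul_le_two_mul_add_of_le_two_mul_add {Q a b m n : ℕ} (hQ : 0 < Q)
    (hm : Q = a * m) (hn : Q = b * n) (h : Q ≤ 2 * (a + b)) : m * n ≤ 2 * (m + n) := by
  refine Nat.le_of_mul_le_mul_left ?_ hQ
  calc Q * (m * n) ≤ 2 * (a + b) * (m * n) := Nat.mul_le_mul_right _ h
    _ = 2 * ((a * m) * n + (b * n) * m) := by ring
    _ = Q * (2 * (m + n)) := by rw [← hm, ← hn]; ring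

theorem odd_cofactors_of_mul_le_two_mul_add {m n : ℕ} (hm : Odd m) (hn : Odd n)
    (hm3 : 3 ≤ m) (hn3 : 3 ≤ n) (h : m * n ≤ 2 * (m + n)) :
    (m = 3 ∧ n = 3) ∨ (m = 3 ∧ n = 5) ∨ (m = 5 ∧ n = 3) := by
  have hm6 : m ≤ 6 := by nlinarith
  have hn6 : n ≤ 6 := by nlinarith
  rw [Nat.odd_iff] at hm hn
  interval_cases m <;> interval_cases n <;> omega

theorem eq_five_three_seven_of_gcd_eq_one {a b c : ℕ} (hab : a * 3 = b * 5)
    (hsum : a + b + c = a * 3) (hgcd : Nat.gcd (Nat.gcd a b) c = 1) :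
    a = 5 ∧ b = 3 ∧ c = 7 := by
  obtain ⟨k, hb⟩ : 3 ∣ b := by omega
  have ha : a = 5 * k := by omega
  have hc : c = 7 * k := by omega
  rw [ha, hb, hc, Nat.gcd_mul_right, Nat.gcd_mul_right] at hgcd
  simp only [Nat.reduceGcd, Nat.one_mul] at hgcd
  omega

theorem odd_Q_one_singular_class_is_357_general
    (b₁ b₂ b₃ : ℕ)
    (hgcd : Nat.gcd (Nat.gcd b₁ b₂) b₃ = 1)
    (hodd : Odd (b₁ + b₂ + b₃))
    (hd₁ : b₁ ∣ (b₁ + b₂ + b₃)) (hd₂ : b₂ ∣ (b₁ + b₂ + b₃)) (hd₃ : ¬ b₃ ∣ (b₁ + b₂ + b₃))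
    (hb₃ : 2 * b₃ ≤ b₁ + b₂ + b₃) :
    ({b₁, b₂, b₃} : Multiset ℕ) = {3, 5, 7} := by
  have hQ : 0 < b₁ + b₂ + b₃ := hodd.pos
  have hb₁ : 0 < b₁ := Nat.pos_of_dvd_of_pos hd₁ hQ
  have hb₂ : 0 < b₂ := Nat.pos_of_dvd_of_pos hd₂ hQ
  obtain ⟨m, hm⟩ := hd₁
  obtain ⟨n, hn⟩ := hd₂
  have hm3 := three_le_of_odd_mul_of_lt_mul (hm ▸ hodd) (by omega)
  have hn3 := three_le_of_odd_mul_of_lt_mul (hn ▸ hodd) (by omega)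
  have hmn := mul_le_two_mul_add_of_le_two_mul_add hQ hm hn (by omega)
  rcases odd_cofactors_of_mul_le_two_mul_add (Nat.odd_mul.mp (hm ▸ hodd)).2
      (Nat.odd_mul.mp (hn ▸ hodd)).2 hm3 hn3 hmn with ⟨rfl, rfl⟩ | ⟨rfl, rfl⟩ | ⟨rfl, rfl⟩
  · exact absurd ⟨3, by omega⟩ hd₃
  · obtain ⟨rfl, rfl, rfl⟩ := eq_five_three_seven_of_gcd_eq_one (by omega) (by omega) hgcd
    decide
  · obtain ⟨rfl, rfl, rfl⟩ := eq_five_three_seven_of_gcd_eq_one (a := b₂) (b := b₁) (c := b₃)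
      (by omega) (by omega) (by rwa [Nat.gcd_comm b₂ b₁])
    rfl

/-- If `gcd(b₁,b₂,b₃) = 1`, `Q = b₁+b₂+b₃` is odd, `b₁ ∣ Q`, `b₂ ∣ Q`, `b₃ ∤ Q`,
and `2b₃ ≤ Q`, then `{b₁,b₂,b₃} = {3,5,7}` as multisets. -/
theorem odd_Q_one_singular_class_is_357
    (b₁ b₂ b₃ : ℕ) (h₁ : 0 < b₁) (h₂ : 0 < b₂) (h₃ : 0 < b₃)
    (hgcd : Nat.gcd (Nat.gcd b₁ b₂) b₃ = 1)
    (hodd : Odd (b₁ + b₂ + b₃))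
    (hd₁ : b₁ ∣ (b₁ + b₂ + b₃)) (hd₂ : b₂ ∣ (b₁ + b₂ + b₃)) (hd₃ : ¬ b₃ ∣ (b₁ + b₂ + b₃))
    (hb₃ : 2 * b₃ ≤ b₁ + b₂ + b₃) :
    ({b₁, b₂, b₃} : Multiset ℕ) = {3, 5, 7} :=
  odd_Q_one_singular_class_is_357_general b₁ b₂ b₃ hgcd hodd hd₁ hd₂ hd₃ hb₃
end
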